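/- arXiv:1508.01759 — 5 statements merged into one kernel-verified Lean document; each statement's English description precedes it below -/
import Mathlib

section
/- Let G be a connected triangle-free graph with chromatic number k ≥ 2, and let H = G ⊠ K₂ be the strong product of G with K₂, i.e., the graph on vertex set V(G) × {0,1} in which (u,i) and (v,j) are adjacent if and only if (u = v and i ≠ j) or u and v are adjacent in G. Then H is K₃-WORM colorable and W^-(H) = 2. -/
/-!
Colour `G ⊠ K₂` by the layer `Bool`. Two vertices in the same layer are adjacent only if their
projections are adjacent in `G`, so a triangle inside one layer would project to a triangle of `G`;
hence every triangle meets both layers and gets exactly the two colours. Conversely, an edge `uv`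
of `G` (which exists since `χ(G) ≥ 2`) gives the triangle `(u,0), (u,1), (v,0)`, so every
K₃-WORM colouring uses at least two colours.
-/

open SimpleGraph

def IsWormColoring {V : Type*} (G : SimpleGraph V) (c : V → ℕ) : Prop :=
  ∀ u v w : V, G.Adj u v → G.Adj u w → G.Adj v w → ({c u, c v, c w} : Finset ℕ).card = 2

def colorsUsed {V : Type*} [Fintype V] (c : V → ℕ) : ℕ := (Finset.univ.image c).card

def wormFeasible {V : Type*} [Fintype V] (G : SimpleGraph V) : Set ℕ :=
  {s | ∃ c : V → ℕ, IsWormColoring G c ∧ colorsUsed c = s}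

def TriangleFree {V : Type*} (G : SimpleGraph V) : Prop :=
  ∀ u v w : V, G.Adj u v → G.Adj u w → G.Adj v w → False

def strongProdK2 {V : Type*} (G : SimpleGraph V) : SimpleGraph (V × Bool) :=
  SimpleGraph.fromRel (fun p q => (p.1 = q.1 ∧ p.2 ≠ q.2) ∨ G.Adj p.1 q.1)

theorem two_le_colorsUsed_of_isWormColoring {V : Type*} [Fintype V] {G : SimpleGraph V}
    {c : V → ℕ} (hc : IsWormColoring G c) {u v w : V}
    (huv : G.Adj u v) (huw : G.Adj u w) (hvw : G.Adj v w) : 2 ≤ colorsUsed c :=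
  calc 2 = ({c u, c v, c w} : Finset ℕ).card := (hc u v w huv huw hvw).symm
    _ ≤ colorsUsed c := Finset.card_le_card <| by simp [Finset.insert_subset_iff]

namespace strongProdK2

variable {V : Type*} {G : SimpleGraph V}

theorem adj_iff {p q : V × Bool} :
    (strongProdK2 G).Adj p q ↔ p ≠ q ∧ ((p.1 = q.1 ∧ p.2 ≠ q.2) ∨ G.Adj p.1 q.1) := by
  simp only [strongProdK2, fromRel_adj]
  refine and_congr_right fun _ => ⟨?_, Or.inl⟩
  rintro ((h | h) | ⟨h₁, h₂⟩ | h)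
  exacts [Or.inl h, Or.inr h, Or.inl ⟨h₁.symm, Ne.symm h₂⟩, Or.inr h.symm]

theorem adj_of_adj_fst {u v : V} (huv : G.Adj u v) (i j : Bool) :
    (strongProdK2 G).Adj (u, i) (v, j) :=
  adj_iff.mpr ⟨fun h => huv.ne (Prod.ext_iff.mp h).1, Or.inr huv⟩

theorem adj_same_fst (u : V) : (strongProdK2 G).Adj (u, false) (u, true) :=
  adj_iff.mpr ⟨by simp, Or.inl ⟨rfl, by simp⟩⟩

theorem adj_fst_of_snd_eq {p q : V × Bool} (h : (strongProdK2 G).Adj p q) (hpq : p.2 = q.2) :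
    G.Adj p.1 q.1 := by
  obtain ⟨-, ⟨-, hne⟩ | hadj⟩ := adj_iff.mp h
  exacts [absurd hpq hne, hadj]

theorem isWormColoring_snd (htf : TriangleFree G) :
    IsWormColoring (strongProdK2 G) (fun p => p.2.toNat) := by
  intro u v w huv huw hvw
  have hlayers : ¬(u.2 = v.2 ∧ u.2 = w.2) := fun ⟨h₁, h₂⟩ =>
    htf _ _ _ (adj_fst_of_snd_eq huv h₁) (adj_fst_of_snd_eq huw h₂)
      (adj_fst_of_snd_eq hvw (h₁ ▸ h₂))
  change ({u.2.toNat, v.2.toNat, w.2.toNat} : Finset ℕ).card = 2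
  revert hlayers
  generalize u.2 = a, v.2 = b, w.2 = c
  revert a b c
  decide

theorem two_le_colorsUsed [Fintype V] {c : V × Bool → ℕ}
    (hc : IsWormColoring (strongProdK2 G) c) {u v : V} (huv : G.Adj u v) :
    2 ≤ colorsUsed c :=
  two_le_colorsUsed_of_isWormColoring hc (adj_same_fst u) (adj_of_adj_fst huv false false)
    (adj_of_adj_fst huv true false)

theorem colorsUsed_snd [Fintype V] (htf : TriangleFree G) {u v : V} (huv : G.Adj u v) :
    colorsUsed (fun p : V × Bool => p.2.toNat) = 2 := by
  refine le_antisymm ?_ (two_le_colorsUsed (isWormColoring_snd htf) huv)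
  calc colorsUsed (fun p : V × Bool => p.2.toNat) ≤ (Finset.range 2).card :=
        Finset.card_le_card <| Finset.image_subset_iff.mpr fun p _ =>
          Finset.mem_range.mpr p.2.toNat_lt
    _ = 2 := Finset.card_range 2

end strongProdK2

theorem wormLower_strongProdK2_eq_two_general {V : Type*} [Fintype V]
    (G : SimpleGraph V) (k : ℕ) (hk : 2 ≤ k)
    (htf : TriangleFree G)
    (hchi : G.chromaticNumber = (k : ℕ∞)) :
    (∃ c : V × Bool → ℕ, IsWormColoring (strongProdK2 G) c) ∧
    IsLeast (wormFeasible (strongProdK2 G)) 2 := by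
  have hχ : 2 ≤ G.chromaticNumber := hchi ▸ by exact_mod_cast hk
  obtain ⟨u, v, huv⟩ := ne_bot_iff_exists_adj.mp (two_le_chromaticNumber_iff_ne_bot.mp hχ)
  have hworm := strongProdK2.isWormColoring_snd htf
  refine ⟨⟨_, hworm⟩, ⟨_, hworm, strongProdK2.colorsUsed_snd htf huv⟩, ?_⟩
  rintro s ⟨c, hc, rfl⟩
  exact strongProdK2.two_le_colorsUsed hc huv

/-- If `G` is a connected triangle-free graph with chromatic number `k ≥ 2`, then
`H = G ⊠ K₂` is K₃-WORM colorable and its K₃-WORM lower chromatic number is 2. -/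
theorem wormLower_strongProdK2_eq_two {V : Type*} [Fintype V]
    (G : SimpleGraph V) (k : ℕ) (hk : 2 ≤ k)
    (hconn : G.Connected) (htf : TriangleFree G)
    (hchi : G.chromaticNumber = (k : ℕ∞)) :
    (∃ c : V × Bool → ℕ, IsWormColoring (strongProdK2 G) c) ∧
    IsLeast (wormFeasible (strongProdK2 G)) 2 :=
  wormLower_strongProdK2_eq_two_general G k hk htf hchi
end

section
/- Let G be a connected triangle-free graph on vertex set {v₁,…,vₙ}, and let H = G ⊠ K₂ be the graph on vertex set V(G) × {0,1} in which (u,i) and (v,j) are adjacent if and only if (u = v and i ≠ j) or u and v are adjacent in G. Then: (a) if c is a K₃-WORM coloring of H with c(v₁,0) = c(v₁,1), then c(v,0) = c(v,1) for every vertex v of G, and the map v ↦ c(v,0) is a proper vertex coloring of G using the same number of colors as c; (b) conversely, for every proper vertex coloring φ of G, the map (v,i) ↦ φ(v) is a K₃-WORM coloring of H using the same number of colors as φ. Hence for every s, the K₃-WORM colorings of H with exactly s colors in which (v₁,0) and (v₁,1) get the same color are in one-to-one correspondence with the proper vertex colorings of G with exactly s colors. -/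
open SimpleGraph

/-! If both copies of a vertex `u` of `G` share a color `a`, the triangles
`(u,0), (u,1), (v,j)` force every copy of a neighbour `v` to avoid `a`, and then the triangle
`(u,0), (v,0), (v,1)` forces `c (v,0) = c (v,1)`. Connectivity spreads this from `v₁` to all
of `G`, so `c` factors through the projection to `G`, as a proper coloring. Conversely, when `G`
is triangle-free every triangle of `G ⊠ K₂` consists of both copies of one vertex and a copy of
a neighbour, so a proper coloring lifted along the projection sees exactly two colors on it. -/

theorem SimpleGraph.Preconnected.forall_of_adj_imp {V : Type*} {G : SimpleGraph V}
    (hG : G.Preconnected) {P : V → Prop} (hP : ∀ u v, G.Adj u v → P u → P v) {v₀ : V}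
    (h₀ : P v₀) (v : V) : P v := by
  obtain ⟨w⟩ := hG v₀ v
  induction w with
  | nil => exact h₀
  | cons hadj _ ih => exact ih (hP _ _ hadj h₀)

theorem Finset.card_triple_eq_two_iff {α : Type*} [DecidableEq α] (a b c : α) :
    ({a, b, c} : Finset α).card = 2 ↔
      (a = b ∧ b ≠ c) ∨ (a = c ∧ a ≠ b) ∨ (b = c ∧ a ≠ b) := by
  by_cases hab : a = b <;> by_cases hac : a = c <;> by_cases hbc : b = c <;> simp_all

theorem colorsUsed_comp_of_surjective {V W : Type*} [Fintype V] [Fintype W]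
    {f : W → V} (hf : Function.Surjective f) (φ : V → ℕ) :
    colorsUsed (φ ∘ f) = colorsUsed φ := by
  classical
  rw [colorsUsed, colorsUsed, ← Finset.image_image, Finset.image_univ_of_surjective hf]

section StrongProdK2

variable {V : Type*} {G : SimpleGraph V}

theorem strongProdK2_adj {p q : V × Bool} :
    (strongProdK2 G).Adj p q ↔ p ≠ q ∧ (p.1 = q.1 ∨ G.Adj p.1 q.1) := by
  simp only [strongProdK2, SimpleGraph.fromRel_adj]
  grind [SimpleGraph.adj_symm]

theorem strongProdK2_adj_of_ne (u : V) {i j : Bool} (h : i ≠ j) :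
    (strongProdK2 G).Adj (u, i) (u, j) :=
  strongProdK2_adj.2 ⟨by simp [h], Or.inl rfl⟩

theorem strongProdK2_adj_of_adj {u v : V} (i j : Bool) (h : G.Adj u v) :
    (strongProdK2 G).Adj (u, i) (v, j) :=
  strongProdK2_adj.2 ⟨by simp [h.ne], Or.inr h⟩

theorem TriangleFree.strongProdK2_triangle_fst (htf : TriangleFree G) {p q r : V × Bool}
    (hpq : (strongProdK2 G).Adj p q) (hpr : (strongProdK2 G).Adj p r)
    (hqr : (strongProdK2 G).Adj q r) :
    (p.1 = q.1 ∧ G.Adj q.1 r.1) ∨ (p.1 = r.1 ∧ G.Adj p.1 q.1) ∨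
      (q.1 = r.1 ∧ G.Adj p.1 q.1) := by
  rcases p with ⟨u, i⟩; rcases q with ⟨v, j⟩; rcases r with ⟨w, k⟩
  simp only [strongProdK2_adj, ne_eq, Prod.mk.injEq] at hpq hpr hqr ⊢
  have hG_triangle := htf u v w
  have hBool_two : i ≠ j → i ≠ k → j ≠ k → False := by cases i <;> cases j <;> cases k <;> simp
  rcases hpq with ⟨_, rfl | _⟩ <;> rcases hpr with ⟨_, rfl | _⟩ <;>
    rcases hqr with ⟨_, _ | _⟩ <;> grind

theorem TriangleFree.isWormColoring_strongProdK2_comp_fst (htf : TriangleFree G) {φ : V → ℕ}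
    (hφ : ∀ u v, G.Adj u v → φ u ≠ φ v) :
    IsWormColoring (strongProdK2 G) (fun p => φ p.1) := by
  intro p q r hpq hpr hqr
  rw [Finset.card_triple_eq_two_iff]
  rcases htf.strongProdK2_triangle_fst hpq hpr hqr with ⟨h, hadj⟩ | ⟨h, hadj⟩ | ⟨h, hadj⟩
  · exact Or.inl ⟨congrArg φ h, hφ _ _ hadj⟩
  · exact Or.inr (Or.inl ⟨congrArg φ h, hφ _ _ hadj⟩)
  · exact Or.inr (Or.inr ⟨congrArg φ h, hφ _ _ hadj⟩)

variable {c : V × Bool → ℕ}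

theorem IsWormColoring.strongProdK2_propagate (hw : IsWormColoring (strongProdK2 G) c)
    {u v : V} (huv : G.Adj u v) (hu : c (u, false) = c (u, true)) :
    c (v, false) = c (v, true) ∧ c (u, false) ≠ c (v, false) := by
  have hne : ∀ j, c (u, false) ≠ c (v, j) := by
    intro j
    have h := hw _ _ _ (strongProdK2_adj_of_ne u Bool.false_ne_true)
      (strongProdK2_adj_of_adj false j huv) (strongProdK2_adj_of_adj true j huv)
    rw [← hu, Finset.card_triple_eq_two_iff] at h
    grind
  have h := hw _ _ _ (strongProdK2_adj_of_adj false false huv)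
    (strongProdK2_adj_of_adj false true huv) (strongProdK2_adj_of_ne v Bool.false_ne_true)
  rw [Finset.card_triple_eq_two_iff] at h
  exact ⟨by grind, hne false⟩

theorem IsWormColoring.strongProdK2_fst_eq_snd (hw : IsWormColoring (strongProdK2 G) c)
    (hG : G.Preconnected) {v₁ : V} (h₁ : c (v₁, false) = c (v₁, true)) (v : V) :
    c (v, false) = c (v, true) :=
  hG.forall_of_adj_imp (fun _ _ huv hu => (hw.strongProdK2_propagate huv hu).1) h₁ v

theorem comp_fst_eq_of_fst_eq_snd (hc : ∀ v, c (v, false) = c (v, true)) :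
    (fun p : V × Bool => c (p.1, false)) = c := by
  funext ⟨v, i⟩
  cases i
  · rfl
  · exact hc v

end StrongProdK2

/-- For a connected triangle-free graph `G` with distinguished vertex `v₁` and
`H = G ⊠ K₂`:
(a) every K₃-WORM coloring `c` of `H` with `c (v₁,0) = c (v₁,1)` is monochromatic on
each pair `{(v,0),(v,1)}`, and `v ↦ c (v,0)` is a proper coloring of `G` with the same
number of colors;
(b) for every proper coloring `φ` of `G`, the map `(v,i) ↦ φ v` is a K₃-WORM coloring
of `H` with the same number of colors;
hence, for every `s`, the K₃-WORM colorings of `H` with exactly `s` colors in which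
`(v₁,0)` and `(v₁,1)` get the same color are in one-to-one correspondence with the
proper colorings of `G` with exactly `s` colors. -/
theorem strongProdK2_worm_correspondence {V : Type*} [Fintype V]
    (G : SimpleGraph V) (hconn : G.Connected) (htf : TriangleFree G) (v₁ : V) :
    (∀ c : V × Bool → ℕ, IsWormColoring (strongProdK2 G) c →
      c (v₁, false) = c (v₁, true) →
        (∀ v : V, c (v, false) = c (v, true)) ∧
        (∀ u v : V, G.Adj u v → c (u, false) ≠ c (v, false)) ∧
        colorsUsed (fun v : V => c (v, false)) = colorsUsed c) ∧
    (∀ φ : V → ℕ, (∀ u v : V, G.Adj u v → φ u ≠ φ v) →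
        IsWormColoring (strongProdK2 G) (fun p : V × Bool => φ p.1) ∧
        colorsUsed (fun p : V × Bool => φ p.1) = colorsUsed φ) ∧
    (∀ s : ℕ, Nonempty
      ({c : V × Bool → ℕ // IsWormColoring (strongProdK2 G) c ∧ colorsUsed c = s ∧
          c (v₁, false) = c (v₁, true)} ≃
       {φ : V → ℕ // (∀ u v : V, G.Adj u v → φ u ≠ φ v) ∧ colorsUsed φ = s})) := by
  have partA : ∀ c : V × Bool → ℕ, IsWormColoring (strongProdK2 G) c →
      c (v₁, false) = c (v₁, true) →
        (∀ v : V, c (v, false) = c (v, true)) ∧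
        (∀ u v : V, G.Adj u v → c (u, false) ≠ c (v, false)) ∧
        colorsUsed (fun v : V => c (v, false)) = colorsUsed c := by
    intro c hw h₁
    have hmono := hw.strongProdK2_fst_eq_snd hconn.preconnected h₁
    refine ⟨hmono, fun u v huv => (hw.strongProdK2_propagate huv (hmono u)).2, ?_⟩
    conv_rhs => rw [← comp_fst_eq_of_fst_eq_snd hmono]
    exact (colorsUsed_comp_of_surjective Prod.fst_surjective _).symm
  have partB : ∀ φ : V → ℕ, (∀ u v : V, G.Adj u v → φ u ≠ φ v) →
      IsWormColoring (strongProdK2 G) (fun p : V × Bool => φ p.1) ∧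
      colorsUsed (fun p : V × Bool => φ p.1) = colorsUsed φ := fun φ hφ =>
    ⟨htf.isWormColoring_strongProdK2_comp_fst hφ,
      colorsUsed_comp_of_surjective Prod.fst_surjective φ⟩
  refine ⟨partA, partB, fun s => ⟨
    { toFun := fun c => ⟨fun v => c.1 (v, false), (partA c.1 c.2.1 c.2.2.2).2.1,
        (partA c.1 c.2.1 c.2.2.2).2.2.trans c.2.2.1⟩
      invFun := fun φ => ⟨fun p => φ.1 p.1, (partB φ.1 φ.2.1).1,
        (partB φ.1 φ.2.1).2.trans φ.2.2, rfl⟩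
      left_inv := fun c => Subtype.ext
        (comp_fst_eq_of_fst_eq_snd (partA c.1 c.2.1 c.2.2.2).1)
      right_inv := fun φ => rfl }⟩⟩
end

section
/- There exists a finite K₄-free graph G (i.e., G contains no four pairwise adjacent vertices) that is K₃-WORM colorable and satisfies W^-(G) = 3. -/
open SimpleGraph

/-- `G` is K₄-free: it has no four pairwise adjacent vertices. -/
def K4Free {V : Type*} (G : SimpleGraph V) : Prop :=
  ∀ a b c d : V, G.Adj a b → G.Adj a c → G.Adj a d →
    G.Adj b c → G.Adj b d → G.Adj c d → False

/-!
A 2-coloring is a K₃-WORM coloring exactly when no triangle is monochromatic, and a K₃-WORM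
coloring with at most two colors is, after renaming the colors, such a 2-coloring. So a graph that
has a K₃-WORM coloring with exactly three colors, and in which every red/blue coloring of the
vertices has a monochromatic triangle, has `W⁻ = 3`. K₄-free graphs of the second kind are the
vertex Folkman graphs for `(3, 3; 4)`, which have at least 14 vertices (Nenov), so some finite
verification is unavoidable: we take one on 16 vertices that is a union of 45 triangles and check
its 2-colorings by a backtracking search over partial colorings.
-/

variable {V : Type*}

/-- Folkman's vertex arrow `G →ᵥ (3, 3)`. -/
def VertexArrowsTriangle (G : SimpleGraph V) : Prop :=
  ∀ f : V → Bool, ∃ u v w, G.Adj u v ∧ G.Adj u w ∧ G.Adj v w ∧ f u = f v ∧ f u = f w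

theorem VertexArrowsTriangle.three_le_colorsUsed [Fintype V] {G : SimpleGraph V}
    (hG : VertexArrowsTriangle G) {c : V → ℕ} (hc : IsWormColoring G c) :
    3 ≤ colorsUsed c := by
  by_contra! hlt
  obtain ⟨x₀, -⟩ := hG fun _ => true
  have hsame : ∀ {x y}, decide (c x = c x₀) = decide (c y = c x₀) → c x = c y := by
    intro x y hxy
    by_cases hx : c x = c x₀
    · simp_all
    · have hy : c y ≠ c x₀ := by simpa [hx] using hxy
      by_contra hne
      have hmem : ∀ z, c z ∈ Finset.univ.image c := fun z =>
        Finset.mem_image_of_mem c (Finset.mem_univ z)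
      exact hlt.not_ge (Finset.two_lt_card.2
        ⟨c x₀, hmem x₀, c x, hmem x, c y, hmem y, Ne.symm hx, Ne.symm hy, hne⟩)
  obtain ⟨u, v, w, huv, huw, hvw, hfuv, hfuw⟩ := hG fun x => decide (c x = c x₀)
  have hcard := hc u v w huv huw hvw
  rw [← hsame hfuv, ← hsame hfuw] at hcard
  simp at hcard

section BacktrackingSearch

/-! A partial 2-coloring of `Fin n` is a pair `(k, m)`: the vertices `i < k` are colored, with
color `m.testBit i`. `allExtensionsMono T k m j` runs through its extensions to the vertices
below `k + j`, cutting a branch as soon as some triangle of `T` is monochromatic. -/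

variable {n : ℕ}

def monoUnder (k m : ℕ) (t : Fin n × Fin n × Fin n) : Bool :=
  (t.1 < k && t.2.1 < k && t.2.2 < k) &&
    (m.testBit t.1 == m.testBit t.2.1 && m.testBit t.1 == m.testBit t.2.2)

def allExtensionsMono (T : List (Fin n × Fin n × Fin n)) (k m : ℕ) : ℕ → Bool
  | 0 => T.any (monoUnder k m)
  | j + 1 => T.any (monoUnder k m) ||
      (allExtensionsMono T (k + 1) (m ||| 2 ^ k) j && allExtensionsMono T (k + 1) m j)

def EncodesBelow (f : Fin n → Bool) (k m : ℕ) : Prop :=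
  ∀ i : Fin n, m.testBit i = (decide (i.val < k) && f i)

theorem EncodesBelow.eq_and_eq_of_monoUnder {f : Fin n → Bool} {k m : ℕ}
    (hf : EncodesBelow f k m) {t : Fin n × Fin n × Fin n} (ht : monoUnder k m t = true) :
    f t.1 = f t.2.1 ∧ f t.1 = f t.2.2 := by
  simp only [monoUnder, Bool.and_eq_true, decide_eq_true_eq, beq_iff_eq] at ht
  obtain ⟨⟨⟨h₁, h₂⟩, h₃⟩, e₁, e₂⟩ := ht
  rw [hf, hf] at e₁ e₂
  simp only [h₁, h₂, h₃, decide_true, Bool.true_and] at e₁ e₂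
  exact ⟨e₁, e₂⟩

theorem EncodesBelow.succ {f : Fin n → Bool} {k m : ℕ} (hf : EncodesBelow f k m) :
    EncodesBelow f (k + 1) (m ||| 2 ^ k) ∨ EncodesBelow f (k + 1) m := by
  by_cases h : ∃ i : Fin n, i.val = k ∧ f i = true
  · left
    obtain ⟨i₀, rfl, hi₀⟩ := h
    intro i
    rw [Nat.testBit_lor, hf, Nat.testBit_two_pow]
    rcases lt_trichotomy i.val i₀ with hlt | heq | hgt
    · simp [hlt, hlt.trans (Nat.lt_succ_self _), hlt.ne']
    · simp [Fin.ext heq, hi₀]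
    · simp [hgt.not_gt, hgt.ne, show ¬ i.val < i₀ + 1 by omega]
  · right
    intro i
    rw [hf]
    by_cases hik : i.val = k
    · simp_all
    · simp [show i.val < k ↔ i.val < k + 1 by omega]

theorem exists_mono_of_allExtensionsMono {T : List (Fin n × Fin n × Fin n)} {f : Fin n → Bool} :
    ∀ {j k m : ℕ}, allExtensionsMono T k m j = true → EncodesBelow f k m →
      ∃ t ∈ T, f t.1 = f t.2.1 ∧ f t.1 = f t.2.2
  | 0, k, m, h, hf => by
    obtain ⟨t, hT, ht⟩ := List.any_eq_true.1 h
    exact ⟨t, hT, hf.eq_and_eq_of_monoUnder ht⟩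
  | j + 1, k, m, h, hf => by
    rcases Bool.or_eq_true_iff.1 h with h | h
    · obtain ⟨t, hT, ht⟩ := List.any_eq_true.1 h
      exact ⟨t, hT, hf.eq_and_eq_of_monoUnder ht⟩
    · rw [Bool.and_eq_true] at h
      rcases hf.succ with hf' | hf'
      · exact exists_mono_of_allExtensionsMono h.1 hf'
      · exact exists_mono_of_allExtensionsMono h.2 hf'

theorem vertexArrowsTriangle_of_allExtensionsMono {G : SimpleGraph (Fin n)}
    {T : List (Fin n × Fin n × Fin n)}
    (hT : ∀ t ∈ T, G.Adj t.1 t.2.1 ∧ G.Adj t.1 t.2.2 ∧ G.Adj t.2.1 t.2.2)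
    (h : allExtensionsMono T 0 0 n = true) : VertexArrowsTriangle G := by
  intro f
  obtain ⟨t, ht, hmono⟩ := exists_mono_of_allExtensionsMono (f := f) h (by simp [EncodesBelow])
  exact ⟨t.1, t.2.1, t.2.2, (hT t ht).1, (hT t ht).2.1, (hT t ht).2.2, hmono⟩

end BacktrackingSearch

def ofTriangles (T : List (V × V × V)) : SimpleGraph V :=
  fromRel fun u v => ∃ t ∈ T, u ∈ [t.1, t.2.1, t.2.2] ∧ v ∈ [t.1, t.2.1, t.2.2]

instance [DecidableEq V] (T : List (V × V × V)) : DecidableRel (ofTriangles T).Adj :=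
  fun _ _ => inferInstanceAs (Decidable (_ ∧ _))

theorem ofTriangles_adj {T : List (V × V × V)} {t : V × V × V} (ht : t ∈ T) {u v : V}
    (hu : u ∈ [t.1, t.2.1, t.2.2]) (hv : v ∈ [t.1, t.2.1, t.2.2]) (huv : u ≠ v) :
    (ofTriangles T).Adj u v :=
  (fromRel_adj _ _ _).2 ⟨huv, Or.inl ⟨t, ht, hu, hv⟩⟩

/-- Vertices are numbered so that the backtracking search finds monochromatic triangles early. -/
def triangles16 : List (Fin 16 × Fin 16 × Fin 16) :=
  [(0, 1, 2), (0, 1, 8), (0, 1, 13), (0, 2, 4), (0, 4, 6), (0, 4, 9), (0, 6, 8), (0, 6, 15),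
   (0, 8, 9), (0, 9, 13), (1, 2, 3), (1, 3, 7), (1, 3, 12), (1, 3, 13), (1, 7, 8), (1, 7, 10),
   (1, 10, 13), (2, 3, 4), (2, 3, 11), (2, 3, 14), (3, 4, 5), (3, 4, 12), (3, 5, 7), (3, 5, 14),
   (3, 7, 11), (3, 11, 12), (3, 12, 14), (4, 5, 6), (4, 5, 10), (4, 9, 10), (4, 9, 12),
   (5, 6, 7), (5, 7, 10), (5, 10, 14), (6, 7, 8), (6, 7, 11), (7, 8, 9), (7, 9, 10), (7, 9, 11),
   (8, 9, 14), (9, 10, 13), (9, 10, 14), (9, 11, 12), (9, 12, 14), (12, 14, 15)]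

abbrev graph16 : SimpleGraph (Fin 16) := ofTriangles triangles16

def coloring16 : Fin 16 → ℕ := ![2, 2, 1, 2, 1, 2, 2, 1, 1, 2, 2, 2, 1, 0, 1, 0]

theorem k4Free_graph16 : K4Free graph16 := by
  -- looking for `d` only once `a, b, c` form a triangle avoids deciding all 16⁴ quadruples
  have h : ∀ a b c, graph16.Adj a b → graph16.Adj a c → graph16.Adj b c →
      ∀ d, ¬ (graph16.Adj a d ∧ graph16.Adj b d ∧ graph16.Adj c d) := by
    decide +kernel
  exact fun a b c d hab hac had hbc hbd hcd => h a b c hab hac hbc d ⟨had, hbd, hcd⟩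

theorem isWormColoring_coloring16 : IsWormColoring graph16 coloring16 := by
  unfold IsWormColoring
  decide +kernel

theorem colorsUsed_coloring16 : colorsUsed coloring16 = 3 := by
  decide

theorem adj_of_mem_triangles16 : ∀ t ∈ triangles16,
    graph16.Adj t.1 t.2.1 ∧ graph16.Adj t.1 t.2.2 ∧ graph16.Adj t.2.1 t.2.2 := by
  have hsorted : triangles16.all (fun t => t.1 < t.2.1 && t.2.1 < t.2.2) = true := by
    decide +kernel
  intro t ht
  have hlt : t.1 < t.2.1 ∧ t.2.1 < t.2.2 := by simpa using List.all_eq_true.1 hsorted t ht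
  exact ⟨ofTriangles_adj ht (by simp) (by simp) hlt.1.ne,
    ofTriangles_adj ht (by simp) (by simp) (hlt.1.trans hlt.2).ne,
    ofTriangles_adj ht (by simp) (by simp) hlt.2.ne⟩

theorem vertexArrowsTriangle_graph16 : VertexArrowsTriangle graph16 :=
  vertexArrowsTriangle_of_allExtensionsMono adj_of_mem_triangles16 (by decide +kernel)

/-- There exists a finite K₄-free graph which is K₃-WORM colorable and whose
K₃-WORM lower chromatic number equals 3. -/
theorem exists_K4Free_wormLower_eq_three :
    ∃ (n : ℕ) (G : SimpleGraph (Fin n)),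
      K4Free G ∧
      (∃ c : Fin n → ℕ, IsWormColoring G c) ∧
      IsLeast (wormFeasible G) 3 := by
  refine ⟨16, graph16, k4Free_graph16, ⟨coloring16, isWormColoring_coloring16⟩,
    ⟨coloring16, isWormColoring_coloring16, colorsUsed_coloring16⟩, ?_⟩
  rintro s ⟨c, hc, rfl⟩
  exact vertexArrowsTriangle_graph16.three_le_colorsUsed hc
end

section
/- Every finite 3-degenerate graph G is K₃-WORM colorable and satisfies W^-(G) ≤ 2; in fact, G admits a K₃-WORM coloring that uses at most two colors. -/
open SimpleGraph

/-- `G` is 3-degenerate: every nonempty set `S` of vertices contains a vertex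
with at most 3 neighbors inside `S`. -/
def ThreeDegenerate {V : Type*} (G : SimpleGraph V) [DecidableRel G.Adj] : Prop :=
  ∀ S : Finset V, S.Nonempty → ∃ v ∈ S, (S.filter (G.Adj v)).card ≤ 3

/-!
With two colors no triangle can be rainbow, so a K₃-WORM 2-coloring is just a 2-coloring without
monochromatic triangles. Such a coloring is built along a degeneracy order: a vertex `v` with at
most three earlier neighbours sees, in one of the two colors, at most one of them; giving `v` that
color creates no monochromatic triangle through `v`.
-/

theorem exists_card_filter_color_le_one {α : Type*} (c : α → Bool) {N : Finset α}
    (hN : N.card ≤ 3) : ∃ b, (N.filter (c · = b)).card ≤ 1 := by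
  have hsplit := N.card_filter_add_card_filter_not (c · = true)
  simp only [Bool.not_eq_true] at hsplit
  by_cases h : (N.filter (c · = true)).card ≤ 1
  · exact ⟨true, h⟩
  · exact ⟨false, by omega⟩

section MonochromaticTriangles

variable {V : Type*} {G : SimpleGraph V}

theorem exists_update_no_monochromatic_triangle [DecidableEq V] [DecidableRel G.Adj]
    {S : Finset V} {v : V} (hv : (S.filter (G.Adj v)).card ≤ 3) {c : V → Bool}
    (hc : ∀ t ⊆ S.erase v, G.IsNClique 3 t → ∀ b, ¬∀ x ∈ t, c x = b) :
    ∃ b, ∀ t ⊆ S, G.IsNClique 3 t → ∀ b', ¬∀ x ∈ t, Function.update c v b x = b' := by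
  obtain ⟨b, hb⟩ := exists_card_filter_color_le_one c hv
  refine ⟨b, fun t htS ht b' hmono => ?_⟩
  by_cases hvt : v ∈ t
  · have hb' : b = b' := by simpa using hmono v hvt
    have hsub : t.erase v ⊆ (S.filter (G.Adj v)).filter (c · = b) := fun x hx => by
      obtain ⟨hxv, hxt⟩ := Finset.mem_erase.1 hx
      have hcx := hmono x hxt
      rw [Function.update_of_ne hxv] at hcx
      simp only [Finset.mem_filter]
      exact ⟨⟨htS hxt, ht.isClique hvt hxt (Ne.symm hxv)⟩, hcx.trans hb'.symm⟩
    have hcard := Finset.card_le_card hsub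
    rw [Finset.card_erase_of_mem hvt, ht.card_eq] at hcard
    omega
  · refine hc t (fun x hx => Finset.mem_erase.2 ⟨ne_of_mem_of_not_mem hx hvt, htS hx⟩) ht b'
      fun x hx => ?_
    rw [← Function.update_of_ne (ne_of_mem_of_not_mem hx hvt) b c]
    exact hmono x hx

theorem ThreeDegenerate.exists_no_monochromatic_triangle [DecidableRel G.Adj]
    (hdeg : ThreeDegenerate G) (S : Finset V) :
    ∃ c : V → Bool, ∀ t ⊆ S, G.IsNClique 3 t → ∀ b, ¬∀ x ∈ t, c x = b := by
  classical
  induction S using Finset.strongInduction with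
  | _ S ih =>
    obtain rfl | hS := S.eq_empty_or_nonempty
    · refine ⟨fun _ => false, fun t ht hclique => absurd hclique.card_eq ?_⟩
      simp [Finset.subset_empty.1 ht]
    obtain ⟨v, hvS, hv⟩ := hdeg S hS
    obtain ⟨c, hc⟩ := ih (S.erase v) (Finset.erase_ssubset hvS)
    obtain ⟨b, hb⟩ := exists_update_no_monochromatic_triangle hv hc
    exact ⟨_, hb⟩

end MonochromaticTriangles

theorem card_toNat_triple_eq_two {a b c : Bool} (h : ¬(a = c ∧ b = c)) :
    ({a.toNat, b.toNat, c.toNat} : Finset ℕ).card = 2 := by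
  revert a b c
  decide

theorem colorsUsed_comp_le {V α : Type*} [Fintype V] [Fintype α] [DecidableEq α]
    (c : V → α) (f : α → ℕ) : colorsUsed (f ∘ c) ≤ Fintype.card α := by
  rw [colorsUsed, Finset.image_comp]
  exact Finset.card_image_le.trans (Finset.card_le_univ _)

/-- Every finite 3-degenerate graph is K₃-WORM colorable with at most two colors;
in particular its K₃-WORM lower chromatic number is at most 2. -/
theorem threeDegenerate_worm_two_colorable {V : Type*} [Fintype V]
    (G : SimpleGraph V) [DecidableRel G.Adj] (hdeg : ThreeDegenerate G) :
    (∃ c : V → ℕ, IsWormColoring G c ∧ colorsUsed c ≤ 2) ∧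
    (∀ w : ℕ, IsLeast (wormFeasible G) w → w ≤ 2) := by
  classical
  obtain ⟨c, hc⟩ := hdeg.exists_no_monochromatic_triangle Finset.univ
  have hworm : IsWormColoring G (Bool.toNat ∘ c) := fun u v w huv huw hvw =>
    card_toNat_triple_eq_two fun ⟨hu, hv⟩ =>
      hc {u, v, w} (Finset.subset_univ _) (is3Clique_triple_iff.2 ⟨huv, huw, hvw⟩) (c w)
        (by simp [hu, hv])
  have hcolors : colorsUsed (Bool.toNat ∘ c) ≤ 2 := colorsUsed_comp_le c Bool.toNat
  exact ⟨⟨_, hworm, hcolors⟩, fun w hw => (hw.2 ⟨_, hworm, rfl⟩).trans hcolors⟩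
end

section
/- If G is a finite graph of order n and maximum degree at most 3, then W^+(G) ≥ n/2, with equality if and only if every connected component of G is isomorphic to K₄ (so that G is the disjoint union of n/4 copies of K₄). -/
open SimpleGraph

/-!
Color each vertex `v` by the pair `(T v, ⌊r / 2⌋)`, where `T v` consists of `v` and every vertex
sharing a triangle with `v`, and `r` is the rank of `v` among the vertices with the same `T`.
Every color class then has at most two vertices, so at least `n / 2` colors are used.
In a graph of maximum degree 3 the triangles come in isolated clusters (copies of `K₄`,
diamonds `K₄ - e`, lone triangles), and the fibers of `T` are the `K₄`'s, the spines and
the single tips of the diamonds, the lone triangles, and singletons outside all triangles.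
Hence every triangle contains two vertices of the same color, while no color class is a
triangle: the coloring is K₃-WORM.
A vertex outside every `K₄` forces a fiber of odd size, hence a singleton color class and
more than `n / 2` colors. Conversely, a K₃-WORM coloring uses at most two colors on a clique,
so at most `n / 2` colors when all components are `K₄`'s.
-/

open SimpleGraph Finset

section PairColoring

variable {V β : Type*} [Fintype V] [LinearOrder V] [DecidableEq β] (τ : V → β)

def fiberRank (v : V) : ℕ := #{x | τ x = τ v ∧ x < v}

def pairColor (v : V) : β × ℕ := (τ v, fiberRank τ v / 2)

variable {τ}

lemma fiberRank_lt_fiberRank {x y : V} (h : τ x = τ y) (hxy : x < y) :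
    fiberRank τ x < fiberRank τ y := by
  refine card_lt_card ((ssubset_iff_of_subset fun z hz => ?_).2 ⟨x, by simp [h, hxy], by simp⟩)
  simp only [mem_filter, mem_univ, true_and] at hz ⊢
  exact ⟨hz.1.trans h, hz.2.trans hxy⟩

lemma eq_of_fiberRank_eq {x y : V} (h : τ x = τ y) (hr : fiberRank τ x = fiberRank τ y) :
    x = y := by
  rcases lt_trichotomy x y with hxy | hxy | hxy
  · exact absurd hr (fiberRank_lt_fiberRank h hxy).ne
  · exact hxy
  · exact absurd hr (fiberRank_lt_fiberRank h.symm hxy).ne'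

lemma fiberRank_lt_card (v : V) : fiberRank τ v < #{x | τ x = τ v} :=
  card_lt_card ((ssubset_iff_of_subset fun x hx => by simp_all).2 ⟨v, by simp, by simp⟩)

lemma card_pairColor_fiber_le_two (v : V) : #{x | pairColor τ x = pairColor τ v} ≤ 2 := by
  set k := fiberRank τ v / 2
  calc #{x | pairColor τ x = pairColor τ v} ≤ #(Ico (2 * k) (2 * k + 2)) := by
        refine card_le_card_of_injOn (fiberRank τ) (fun x hx => ?_) (fun x hx y hy hxy => ?_)
        · simp only [coe_filter, mem_univ, true_and, Set.mem_ofPred_eq, pairColor,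
            Prod.mk.injEq] at hx
          simp only [coe_Ico, Set.mem_Ico]
          omega
        · simp only [coe_filter, mem_univ, true_and, Set.mem_ofPred_eq, pairColor,
            Prod.mk.injEq] at hx hy
          exact eq_of_fiberRank_eq (hx.1.trans hy.1.symm) hxy
    _ = 2 := by simp

lemma pairColor_eq_of_card_fiber_le_two {u v : V} (h : τ u = τ v)
    (h2 : #{x | τ x = τ u} ≤ 2) : pairColor τ u = pairColor τ v := by
  have hu := fiberRank_lt_card (τ := τ) u
  have hv := fiberRank_lt_card (τ := τ) v
  rw [← h] at hv
  simp only [pairColor, Prod.mk.injEq]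
  exact ⟨h, by omega⟩

lemma pairColor_eq_or_of_card_fiber_le_four {u v w : V} (hv : τ u = τ v) (hw : τ u = τ w)
    (h4 : #{x | τ x = τ u} ≤ 4) :
    pairColor τ u = pairColor τ v ∨ pairColor τ u = pairColor τ w ∨
      pairColor τ v = pairColor τ w := by
  have ru := fiberRank_lt_card (τ := τ) u
  have rv := fiberRank_lt_card (τ := τ) v
  have rw' := fiberRank_lt_card (τ := τ) w
  rw [← hv] at rv
  rw [← hw] at rw'
  have : fiberRank τ u / 2 = fiberRank τ v / 2 ∨ fiberRank τ u / 2 = fiberRank τ w / 2 ∨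
      fiberRank τ v / 2 = fiberRank τ w / 2 := by omega
  simpa only [pairColor, Prod.mk.injEq, ← hv, ← hw, true_and] using this

lemma exists_pairColor_unique_of_odd {b : β} (hodd : Odd #{x | τ x = b}) :
    ∃ v, ∀ x, pairColor τ x = pairColor τ v → x = v := by
  set F : Finset V := {x | τ x = b} with hF
  have hne : F.Nonempty := card_pos.1 hodd.pos
  obtain ⟨k, hk⟩ := hodd
  set m := F.max' hne
  have hm : τ m = b := (mem_filter.1 (F.max'_mem hne)).2
  have hrank : #F - 1 ≤ fiberRank τ m := by
    rw [← card_erase_of_mem (F.max'_mem hne)]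
    refine card_le_card fun x hx => ?_
    simp only [mem_erase, hF, mem_filter, mem_univ, true_and] at hx ⊢
    exact ⟨hx.2.trans hm.symm, lt_of_le_of_ne (F.le_max' x (by simp [hF, hx.2])) hx.1⟩
  have hlt := fiberRank_lt_card (τ := τ) m
  rw [hm, ← hF] at hlt
  refine ⟨m, fun x hx => ?_⟩
  simp only [pairColor, Prod.mk.injEq] at hx
  have hxm : x ≤ m := F.le_max' x (by simp [hF, hx.1, hm])
  by_contra hne'
  have := fiberRank_lt_fiberRank hx.1 (lt_of_le_of_ne hxm hne')
  omega

end PairColoring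

section Coloring

variable {V : Type*} [Fintype V] {c : V → ℕ}

lemma card_le_two_mul_colorsUsed (hc : ∀ v, #{x | c x = c v} ≤ 2) :
    Fintype.card V ≤ 2 * colorsUsed c := by
  rw [← card_univ]
  refine card_le_mul_card_image _ 2 fun b hb => ?_
  obtain ⟨v, -, rfl⟩ := mem_image.1 hb
  exact hc v

lemma card_lt_two_mul_colorsUsed (hc : ∀ v, #{x | c x = c v} ≤ 2)
    (hv : ∃ v, ∀ x, c x = c v → x = v) : Fintype.card V < 2 * colorsUsed c := by
  obtain ⟨v, hv⟩ := hv
  rw [← card_univ, card_eq_sum_card_image c univ, colorsUsed, mul_comm, ← smul_eq_mul,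
    ← sum_const]
  refine sum_lt_sum (fun b hb => ?_) ⟨c v, mem_image_of_mem _ (mem_univ _), ?_⟩
  · obtain ⟨u, -, rfl⟩ := mem_image.1 hb
    exact hc u
  · refine (card_le_one.2 fun a ha b hb => ?_).trans_lt one_lt_two
    simp only [mem_filter, mem_univ, true_and] at ha hb
    rw [hv a ha, hv b hb]

lemma isWormColoring_of_card_fiber_le_two (G : SimpleGraph V) (hc : ∀ v, #{x | c x = c v} ≤ 2)
    (htri : ∀ u v w, G.Adj u v → G.Adj u w → G.Adj v w →
      c u = c v ∨ c u = c w ∨ c v = c w) :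
    IsWormColoring G c := by
  classical
  intro u v w huv huw hvw
  have hnot : ¬ (c u = c v ∧ c u = c w) := by
    rintro ⟨h1, h2⟩
    have hsub : ({u, v, w} : Finset V) ⊆ ({x | c x = c u} : Finset V) := by
      intro x hx
      simp only [mem_insert, mem_singleton] at hx
      rcases hx with rfl | rfl | rfl
      · simp
      · simpa using h1.symm
      · simpa using h2.symm
    have := card_le_card hsub
    rw [card_eq_three.2 ⟨u, v, w, huv.ne, huw.ne, hvw.ne, rfl⟩] at this
    exact absurd (hc u) (by omega)
  rcases htri u v w huv huw hvw with h | h | h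
  · rw [h, insert_eq_of_mem (mem_insert_self _ _), card_pair]; grind
  · rw [h, pair_comm, insert_eq_of_mem (mem_insert_self _ _), card_pair]; grind
  · rw [h, insert_eq_of_mem (mem_singleton_self _), card_pair]; grind

end Coloring

lemma IsWormColoring.card_image_le_two {V : Type*} {G : SimpleGraph V} {c : V → ℕ}
    (hc : IsWormColoring G c) {s : Finset V} (hs : G.IsClique (s : Set V)) :
    #(s.image c) ≤ 2 := by
  classical
  by_contra! h
  obtain ⟨a, ha, b, hb, d, hd, hab, had, hbd⟩ := two_lt_card.1 h
  obtain ⟨x, hx, rfl⟩ := mem_image.1 ha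
  obtain ⟨y, hy, rfl⟩ := mem_image.1 hb
  obtain ⟨z, hz, rfl⟩ := mem_image.1 hd
  have h2 := hc x y z (hs hx hy (ne_of_apply_ne c hab)) (hs hx hz (ne_of_apply_ne c had))
    (hs hy hz (ne_of_apply_ne c hbd))
  rw [card_eq_three.2 ⟨_, _, _, hab, had, hbd, rfl⟩] at h2
  exact absurd h2 (by norm_num)

/-- The diamond `K₄ - wx` on `{u, v, w, x}`, with spine `uv` and tips `w`, `x`. -/
structure IsDiamond {V : Type*} (G : SimpleGraph V) (u v w x : V) : Prop where
  adj_uv : G.Adj u v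
  adj_uw : G.Adj u w
  adj_vw : G.Adj v w
  adj_ux : G.Adj u x
  adj_vx : G.Adj v x
  ne_wx : w ≠ x
  not_adj_wx : ¬ G.Adj w x

lemma IsDiamond.symm {V : Type*} {G : SimpleGraph V} {u v w x : V} (hD : IsDiamond G u v w x) :
    IsDiamond G v u w x :=
  ⟨hD.adj_uv.symm, hD.adj_vw, hD.adj_uw, hD.adj_vx, hD.adj_ux, hD.ne_wx, hD.not_adj_wx⟩

section TriangleNbhd

variable {V : Type*} [Fintype V] [DecidableEq V] {G : SimpleGraph V} [DecidableRel G.Adj]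

variable (G) in
def closedTriangleNbhd (v : V) : Finset V :=
  insert v ({x | ∃ w, G.Adj v x ∧ G.Adj v w ∧ G.Adj x w} : Finset V)

local notation "T" => closedTriangleNbhd G

lemma mem_closedTriangleNbhd {v x : V} :
    x ∈ T v ↔ x = v ∨ ∃ w, G.Adj v x ∧ G.Adj v w ∧ G.Adj x w := by
  simp [closedTriangleNbhd]

lemma mem_closedTriangleNbhd_of_adj {v x w : V} (hvx : G.Adj v x) (hvw : G.Adj v w)
    (hxw : G.Adj x w) : x ∈ T v :=
  mem_closedTriangleNbhd.2 (Or.inr ⟨w, hvx, hvw, hxw⟩)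

lemma mem_of_closedTriangleNbhd_eq {v z : V} (h : T z = T v) : z ∈ T v :=
  h ▸ mem_insert_self z _

lemma closedTriangleNbhd_subset (v : V) : T v ⊆ insert v (G.neighborFinset v) := by
  intro x hx
  rcases mem_closedTriangleNbhd.1 hx with rfl | ⟨w, hvx, -⟩
  · exact mem_insert_self _ _
  · exact mem_insert_of_mem ((mem_neighborFinset _ _ _).2 hvx)

lemma closedTriangleNbhd_fiber_eq {a : V} (h : ∀ z ∈ T a, T z = T a) :
    ({z | T z = T a} : Finset V) = T a := by
  ext z
  simpa using ⟨mem_of_closedTriangleNbhd_eq, h z⟩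

section MaxDegreeThree

variable (hdeg : ∀ v, G.degree v ≤ 3)
include hdeg

lemma neighborFinset_eq_of_adj {v a b c : V} (ha : G.Adj v a) (hb : G.Adj v b) (hc : G.Adj v c)
    (hab : a ≠ b) (hac : a ≠ c) (hbc : b ≠ c) : G.neighborFinset v = {a, b, c} := by
  refine (eq_of_subset_of_card_le (fun x hx => ?_) ?_).symm
  · simp only [mem_insert, mem_singleton] at hx
    rcases hx with rfl | rfl | rfl <;> simpa
  · rw [card_neighborFinset_eq_degree, card_eq_three.2 ⟨a, b, c, hab, hac, hbc, rfl⟩]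
    exact hdeg v

lemma card_closedTriangleNbhd_fiber_le_four (v : V) : #{z | T z = T v} ≤ 4 :=
  calc #{z | T z = T v} ≤ #(insert v (G.neighborFinset v)) :=
        card_le_card fun z hz => closedTriangleNbhd_subset v
          (mem_of_closedTriangleNbhd_eq (mem_filter.1 hz).2)
    _ ≤ 4 := (card_insert_le _ _).trans (by rw [card_neighborFinset_eq_degree]; linarith [hdeg v])

lemma closedTriangleNbhd_eq_of_common_adj {u v w x : V} (huv : G.Adj u v) (huw : G.Adj u w)
    (hux : G.Adj u x) (hvw : G.Adj v w) (hvx : G.Adj v x) (hwx : w ≠ x) :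
    T u = {u, v, w, x} := by
  have hN := neighborFinset_eq_of_adj hdeg huv huw hux hvw.ne hvx.ne hwx
  refine subset_antisymm (hN ▸ closedTriangleNbhd_subset u) fun y hy => ?_
  simp only [mem_insert, mem_singleton] at hy
  rcases hy with rfl | rfl | rfl | rfl
  · exact mem_insert_self _ _
  · exact mem_closedTriangleNbhd_of_adj huv huw hvw
  · exact mem_closedTriangleNbhd_of_adj huw huv hvw.symm
  · exact mem_closedTriangleNbhd_of_adj hux huv hvx.symm

lemma closedTriangleNbhd_eq_of_unique_common_adj {u v w : V} (huv : G.Adj u v)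
    (huw : G.Adj u w) (hvw : G.Adj v w) (hv : ∀ y, G.Adj u y → G.Adj v y → y = w)
    (hw : ∀ y, G.Adj u y → G.Adj w y → y = v) : T u = {u, v, w} := by
  refine subset_antisymm (fun y hy => ?_) fun y hy => ?_
  · rcases mem_closedTriangleNbhd.1 hy with rfl | ⟨t, huy, hut, hyt⟩
    · exact mem_insert_self _ _
    by_contra hy'
    simp only [mem_insert, mem_singleton, not_or] at hy'
    have hN := neighborFinset_eq_of_adj hdeg huv huw huy hvw.ne (Ne.symm hy'.2.1)
      (Ne.symm hy'.2.2)
    have ht : t ∈ G.neighborFinset u := (mem_neighborFinset _ _ _).2 hut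
    simp only [hN, mem_insert, mem_singleton] at ht
    rcases ht with rfl | rfl | rfl
    · exact hy'.2.2 (hv y huy hyt.symm)
    · exact hy'.2.1 (hw y huy hyt.symm)
    · exact hyt.ne rfl
  · simp only [mem_insert, mem_singleton] at hy
    rcases hy with rfl | rfl | rfl
    · exact mem_insert_self _ _
    · exact mem_closedTriangleNbhd_of_adj huv huw hvw
    · exact mem_closedTriangleNbhd_of_adj huw huv hvw.symm

lemma closedTriangleNbhd_eq_of_four_clique {u v w x : V} (huv : G.Adj u v) (huw : G.Adj u w)
    (hvw : G.Adj v w) (hux : G.Adj u x) (hvx : G.Adj v x) (hwx : G.Adj w x) :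
    T u = T v ∧ T u = T w := by
  rw [closedTriangleNbhd_eq_of_common_adj hdeg huv huw hux hvw hvx hwx.ne,
    closedTriangleNbhd_eq_of_common_adj hdeg huv.symm hvw hvx huw hux hwx.ne,
    closedTriangleNbhd_eq_of_common_adj hdeg huw.symm hvw.symm hwx huv hux hvx.ne]
  constructor <;> ext <;> simp only [mem_insert, mem_singleton] <;> tauto

namespace IsDiamond

variable {u v w x : V} (hD : IsDiamond G u v w x)
include hD

lemma closedTriangleNbhd_eq : T u = {u, v, w, x} :=
  closedTriangleNbhd_eq_of_common_adj hdeg hD.adj_uv hD.adj_uw hD.adj_ux hD.adj_vw hD.adj_vx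
    hD.ne_wx

lemma closedTriangleNbhd_eq_closedTriangleNbhd : T u = T v := by
  rw [hD.closedTriangleNbhd_eq hdeg, hD.symm.closedTriangleNbhd_eq hdeg, insert_comm]

lemma card_closedTriangleNbhd_fiber_le_two : #{z | T z = T u} ≤ 2 := by
  refine (card_le_card fun z hz => ?_).trans (card_le_two (a := u) (b := v))
  have hz' := (mem_filter.1 hz).2
  have hmem := mem_of_closedTriangleNbhd_eq hz'
  rw [hD.closedTriangleNbhd_eq hdeg] at hmem
  simp only [mem_insert, mem_singleton] at hmem ⊢
  rcases hmem with rfl | rfl | rfl | rfl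
  · exact Or.inl rfl
  · exact Or.inr rfl
  · have hx : x ∈ T z := hz' ▸ (hD.closedTriangleNbhd_eq hdeg ▸ by simp)
    rcases mem_closedTriangleNbhd.1 hx with h | ⟨-, h, -⟩
    · exact absurd h.symm hD.ne_wx
    · exact absurd h hD.not_adj_wx
  · have hw : w ∈ T z := hz' ▸ (hD.closedTriangleNbhd_eq hdeg ▸ by simp)
    rcases mem_closedTriangleNbhd.1 hw with h | ⟨-, h, -⟩
    · exact absurd h hD.ne_wx
    · exact absurd h.symm hD.not_adj_wx

lemma closedTriangleNbhd_tip : T w = {w, u, v} := by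
  have hNu := neighborFinset_eq_of_adj hdeg hD.adj_uv hD.adj_uw hD.adj_ux hD.adj_vw.ne
    hD.adj_vx.ne hD.ne_wx
  have hNv := neighborFinset_eq_of_adj hdeg hD.adj_uv.symm hD.adj_vw hD.adj_vx
    hD.adj_uw.ne hD.adj_ux.ne hD.ne_wx
  refine closedTriangleNbhd_eq_of_unique_common_adj hdeg hD.adj_uw.symm hD.adj_vw.symm
    hD.adj_uv (fun y hwy huy => ?_) fun y hwy hvy => ?_
  · have : y ∈ G.neighborFinset u := (mem_neighborFinset _ _ _).2 huy
    simp only [hNu, mem_insert, mem_singleton] at this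
    rcases this with rfl | rfl | rfl
    · rfl
    · exact absurd hwy G.irrefl
    · exact absurd hwy hD.not_adj_wx
  · have : y ∈ G.neighborFinset v := (mem_neighborFinset _ _ _).2 hvy
    simp only [hNv, mem_insert, mem_singleton] at this
    rcases this with rfl | rfl | rfl
    · rfl
    · exact absurd hwy G.irrefl
    · exact absurd hwy hD.not_adj_wx

lemma closedTriangleNbhd_fiber_tip : ({z | T z = T w} : Finset V) = {w} := by
  ext z
  simp only [mem_filter, mem_univ, true_and, mem_singleton]
  refine ⟨fun hz => ?_, fun hz => hz ▸ rfl⟩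
  have hmem := mem_of_closedTriangleNbhd_eq hz
  rw [hD.closedTriangleNbhd_tip hdeg] at hmem
  simp only [mem_insert, mem_singleton] at hmem
  have hxu : x ∈ T u := by rw [hD.closedTriangleNbhd_eq hdeg]; simp
  have hxv : x ∈ T v := hD.closedTriangleNbhd_eq_closedTriangleNbhd hdeg ▸ hxu
  rcases hmem with rfl | rfl | rfl
  · rfl
  all_goals
    have hx : x ∈ T w := by first | exact hz ▸ hxu | exact hz ▸ hxv
    simp only [hD.closedTriangleNbhd_tip hdeg, mem_insert, mem_singleton] at hx
    rcases hx with h | h | h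
    · exact absurd h.symm hD.ne_wx
    · exact absurd h.symm hD.adj_ux.ne
    · exact absurd h.symm hD.adj_vx.ne

end IsDiamond

lemma triangle_cases {u v w : V} (huv : G.Adj u v) (huw : G.Adj u w) (hvw : G.Adj v w) :
    (∃ x, G.Adj u x ∧ G.Adj v x ∧ G.Adj w x) ∨ (∃ x, IsDiamond G u v w x) ∨
      (∃ x, IsDiamond G u w v x) ∨ (∃ x, IsDiamond G v w u x) ∨
      (T u = T v ∧ T u = T w ∧ T u = {u, v, w}) := by
  by_cases hK : ∃ x, G.Adj u x ∧ G.Adj v x ∧ G.Adj w x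
  · exact Or.inl hK
  push Not at hK
  by_cases huv' : ∀ y, G.Adj u y → G.Adj v y → y = w
  swap
  · push Not at huv'
    obtain ⟨x, hux, hvx, hxw⟩ := huv'
    exact Or.inr (Or.inl ⟨x, huv, huw, hvw, hux, hvx, hxw.symm, hK x hux hvx⟩)
  by_cases huw' : ∀ y, G.Adj u y → G.Adj w y → y = v
  swap
  · push Not at huw'
    obtain ⟨x, hux, hwx, hxv⟩ := huw'
    exact Or.inr (Or.inr (Or.inl ⟨x, huw, huv, hvw.symm, hux, hwx, hxv.symm,
      fun hvx => hK x hux hvx hwx⟩))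
  by_cases hvw' : ∀ y, G.Adj v y → G.Adj w y → y = u
  swap
  · push Not at hvw'
    obtain ⟨x, hvx, hwx, hxu⟩ := hvw'
    exact Or.inr (Or.inr (Or.inr (Or.inl ⟨x, hvw, huv.symm, huw.symm, hvx, hwx, hxu.symm,
      fun hux => hK x hux hvx hwx⟩)))
  have hTu := closedTriangleNbhd_eq_of_unique_common_adj hdeg huv huw hvw huv' huw'
  have hTv := closedTriangleNbhd_eq_of_unique_common_adj hdeg huv.symm hvw huw
    (fun y hvy huy => huv' y huy hvy) hvw'
  have hTw := closedTriangleNbhd_eq_of_unique_common_adj hdeg huw.symm hvw.symm huv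
    (fun y hwy huy => huw' y huy hwy) (fun y hwy hvy => hvw' y hvy hwy)
  refine Or.inr (Or.inr (Or.inr (Or.inr ⟨?_, ?_, hTu⟩))) <;>
    simp only [hTu, hTv, hTw] <;> ext <;> simp only [mem_insert, mem_singleton] <;> tauto

lemma exists_odd_card_closedTriangleNbhd_fiber {v : V}
    (hv : ¬ ∃ s, G.IsNClique 4 s ∧ v ∈ s) :
    ∃ a, Odd #{z | T z = T a} := by
  by_cases htri : ∃ y z, G.Adj v y ∧ G.Adj v z ∧ G.Adj y z
  · obtain ⟨y, z, hvy, hvz, hyz⟩ := htri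
    rcases triangle_cases hdeg hvy hvz hyz with
      ⟨x, hvx, hyx, hzx⟩ | ⟨x, hD⟩ | ⟨x, hD⟩ | ⟨x, hD⟩ | ⟨hy, hz, hT⟩
    · exact (hv ⟨{v, y, z, x}, (is3Clique_triple_iff.2 ⟨hyz, hyx, hzx⟩).insert
        (by simp [hvy, hvz, hvx]), by simp⟩).elim
    · exact ⟨z, by simp [hD.closedTriangleNbhd_fiber_tip hdeg]⟩
    · exact ⟨y, by simp [hD.closedTriangleNbhd_fiber_tip hdeg]⟩
    · exact ⟨v, by simp [hD.closedTriangleNbhd_fiber_tip hdeg]⟩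
    · refine ⟨v, ?_⟩
      rw [closedTriangleNbhd_fiber_eq fun a ha => ?_, hT,
        card_eq_three.2 ⟨v, y, z, hvy.ne, hvz.ne, hyz.ne, rfl⟩]
      · decide
      simp only [hT, mem_insert, mem_singleton] at ha
      rcases ha with rfl | rfl | rfl
      exacts [rfl, hy.symm, hz.symm]
  · push Not at htri
    have hT : T v = {v} := by
      ext x
      simp only [mem_closedTriangleNbhd, mem_singleton, or_iff_left_iff_imp]
      rintro ⟨w, hvx, hvw, hxw⟩
      exact absurd hxw (htri x w hvx hvw)
    refine ⟨v, ?_⟩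
    rw [closedTriangleNbhd_fiber_eq fun a ha => by rw [hT] at ha; rw [mem_singleton.1 ha], hT,
      card_singleton]
    exact odd_one

end MaxDegreeThree

end TriangleNbhd

section PairColoringOfTriangles

variable {V : Type*} [Fintype V] [LinearOrder V] {G : SimpleGraph V} [DecidableRel G.Adj]

local notation "P" => pairColor (closedTriangleNbhd G)

lemma pairColor_closedTriangleNbhd_eq_or (hdeg : ∀ v, G.degree v ≤ 3) {u v w : V}
    (huv : G.Adj u v) (huw : G.Adj u w) (hvw : G.Adj v w) :
    P u = P v ∨ P u = P w ∨ P v = P w := by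
  have spine {a b c x : V} (hD : IsDiamond G a b c x) : P a = P b :=
    pairColor_eq_of_card_fiber_le_two (hD.closedTriangleNbhd_eq_closedTriangleNbhd hdeg)
      (hD.card_closedTriangleNbhd_fiber_le_two hdeg)
  rcases triangle_cases hdeg huv huw hvw with
    ⟨x, hux, hvx, hwx⟩ | ⟨x, hD⟩ | ⟨x, hD⟩ | ⟨x, hD⟩ | ⟨hv, hw, -⟩
  · obtain ⟨hv, hw⟩ := closedTriangleNbhd_eq_of_four_clique hdeg huv huw hvw hux hvx hwx
    exact pairColor_eq_or_of_card_fiber_le_four hv hw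
      (card_closedTriangleNbhd_fiber_le_four hdeg u)
  · exact Or.inl (spine hD)
  · exact Or.inr (Or.inl (spine hD))
  · exact Or.inr (Or.inr (spine hD))
  · exact pairColor_eq_or_of_card_fiber_le_four hv hw
      (card_closedTriangleNbhd_fiber_le_four hdeg u)

end PairColoringOfTriangles

theorem exists_isWormColoring_card_le_two_mul_colorsUsed {V : Type*} [Fintype V]
    {G : SimpleGraph V} [DecidableRel G.Adj] (hdeg : ∀ v, G.degree v ≤ 3) :
    ∃ c : V → ℕ, IsWormColoring G c ∧ Fintype.card V ≤ 2 * colorsUsed c ∧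
      ((∃ v, ¬ ∃ s, G.IsNClique 4 s ∧ v ∈ s) → Fintype.card V < 2 * colorsUsed c) := by
  let _ : LinearOrder V := LinearOrder.lift' (Fintype.equivFin V) (Fintype.equivFin V).injective
  obtain ⟨e, he⟩ := Countable.exists_injective_nat (Finset V × ℕ)
  set p := pairColor (closedTriangleNbhd G)
  have hfib : ∀ v, #{x | (e ∘ p) x = (e ∘ p) v} ≤ 2 := fun v => by
    simpa only [Function.comp_apply, he.eq_iff] using card_pairColor_fiber_le_two v
  refine ⟨e ∘ p, isWormColoring_of_card_fiber_le_two G hfib fun u v w huv huw hvw => ?_,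
    card_le_two_mul_colorsUsed hfib, fun ⟨v, hv⟩ => ?_⟩
  · simpa only [Function.comp_apply, he.eq_iff] using
      pairColor_closedTriangleNbhd_eq_or hdeg huv huw hvw
  · obtain ⟨a, ha⟩ := exists_odd_card_closedTriangleNbhd_fiber hdeg hv
    obtain ⟨z, hz⟩ := exists_pairColor_unique_of_odd ha
    exact card_lt_two_mul_colorsUsed hfib ⟨z, fun x hx => hz x (he hx)⟩

section Components

variable {V : Type*} {G : SimpleGraph V}

lemma SimpleGraph.IsNClique.mem_of_adj [Fintype V] [DecidableRel G.Adj] {n : ℕ} {s : Finset V}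
    (hdeg : ∀ v, G.degree v ≤ n) (hs : G.IsNClique (n + 1) s) {x y : V} (hx : x ∈ s)
    (hxy : G.Adj x y) : y ∈ s := by
  classical
  have hN : s.erase x = G.neighborFinset x := by
    refine eq_of_subset_of_card_le (fun z hz => ?_) ?_
    · obtain ⟨hzx, hzs⟩ := mem_erase.1 hz
      exact (mem_neighborFinset _ _ _).2 (hs.isClique hx hzs hzx.symm)
    · rw [card_neighborFinset_eq_degree, card_erase_of_mem hx, hs.card_eq]
      exact hdeg x
  exact mem_of_mem_erase (hN ▸ (mem_neighborFinset _ _ _).2 hxy)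

lemma SimpleGraph.ConnectedComponent.supp_eq_of_isNClique [Fintype V] [DecidableRel G.Adj]
    {n : ℕ} {s : Finset V} (hdeg : ∀ v, G.degree v ≤ n) (hs : G.IsNClique (n + 1) s)
    {v : V} (hv : v ∈ s) {C : G.ConnectedComponent} (hC : v ∈ C.supp) : C.supp = s := by
  have hwalk : ∀ {a b : V}, G.Walk a b → a ∈ s → b ∈ s := by
    intro a b p
    induction p with
    | nil => exact id
    | cons h _ ih => exact fun ha => ih (hs.mem_of_adj hdeg ha h)
  ext x
  refine ⟨fun hx => hwalk (C.reachable_of_mem_supp hC hx).some hv, fun hx => ?_⟩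
  rcases eq_or_ne v x with rfl | hne
  · exact hC
  · exact C.mem_supp_of_adj_mem_supp hC (hs.isClique hv hx hne)

lemma nonempty_induce_supp_iso_top [Fintype V] [DecidableRel G.Adj] {n : ℕ}
    (hdeg : ∀ v, G.degree v ≤ n) (hK : ∀ v, ∃ s, G.IsNClique (n + 1) s ∧ v ∈ s)
    (C : G.ConnectedComponent) :
    Nonempty (G.induce C.supp ≃g (⊤ : SimpleGraph (Fin (n + 1)))) := by
  obtain ⟨v, hv⟩ := C.nonempty_supp
  obtain ⟨s, hs, hvs⟩ := hK v
  rw [C.supp_eq_of_isNClique hdeg hs hvs hv, induce_eq_top.2 hs.isClique]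
  exact ⟨Iso.completeGraph (s.equivFinOfCardEq hs.card_eq)⟩

lemma isClique_of_induce_iso_top {s : Set V} {W : Type*}
    (e : G.induce s ≃g (⊤ : SimpleGraph W)) :
    G.IsClique s := by
  intro a ha b hb hab
  have : (⊤ : SimpleGraph W).Adj (e ⟨a, ha⟩) (e ⟨b, hb⟩) :=
    (top_adj _ _).2 (e.injective.ne fun h => hab (congrArg Subtype.val h))
  simpa using e.map_adj_iff.1 this

lemma two_mul_colorsUsed_le_card [Fintype V] {n : ℕ} (hn : 4 ≤ n)
    (hK : ∀ C : G.ConnectedComponent, Nonempty (G.induce C.supp ≃g (⊤ : SimpleGraph (Fin n))))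
    {c : V → ℕ} (hc : IsWormColoring G c) : 2 * colorsUsed c ≤ Fintype.card V := by
  classical
  let F (C : G.ConnectedComponent) : Finset V := {v | G.connectedComponentMk v = C}
  have hF : ∀ C, 2 * #((F C).image c) ≤ #(F C) := by
    intro C
    obtain ⟨e⟩ := hK C
    have hcoe : (F C : Set V) = C.supp := by ext; simp [F, C.mem_supp_iff]
    have hcard : #(F C) = n := by
      rw [← Set.ncard_coe_finset, hcoe, ← Nat.card_coe_set_eq, Nat.card_congr e.toEquiv,
        Nat.card_eq_fintype_card, Fintype.card_fin]
    have := hc.card_image_le_two (hcoe ▸ isClique_of_induce_iso_top e)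
    omega
  calc 2 * colorsUsed c ≤ 2 * ∑ C, #((F C).image c) := by
        refine Nat.mul_le_mul_left 2 ((card_le_card fun k hk => ?_).trans card_biUnion_le)
        obtain ⟨v, -, rfl⟩ := mem_image.1 hk
        exact mem_biUnion.2
          ⟨G.connectedComponentMk v, mem_univ _, mem_image_of_mem c (by simp [F])⟩
    _ = ∑ C, 2 * #((F C).image c) := mul_sum _ _ _
    _ ≤ ∑ C, #(F C) := sum_le_sum fun C _ => hF C
    _ = Fintype.card V := (card_eq_sum_card_fiberwise fun v _ => mem_coe.2 (mem_univ _)).symm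

end Components

theorem wormUpper_ge_half_general {V : Type*} [Fintype V]
    (G : SimpleGraph V) [DecidableRel G.Adj] (hdeg : ∀ v : V, G.degree v ≤ 3) :
    ∀ w : ℕ, IsGreatest (wormFeasible G) w →
      Fintype.card V ≤ 2 * w ∧
      (Fintype.card V = 2 * w ↔
        ∀ C : G.ConnectedComponent,
          Nonempty (G.induce C.supp ≃g (⊤ : SimpleGraph (Fin 4)))) := by
  intro w hw
  obtain ⟨c, hc, hle, hlt⟩ := exists_isWormColoring_card_le_two_mul_colorsUsed hdeg
  have hcw : colorsUsed c ≤ w := hw.2 ⟨c, hc, rfl⟩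
  refine ⟨by omega, fun heq => nonempty_induce_supp_iso_top hdeg fun v => ?_, fun hK => ?_⟩
  · by_contra hv
    exact absurd (hlt ⟨v, hv⟩) (by omega)
  · obtain ⟨c', hc', rfl⟩ := hw.1
    exact le_antisymm (by omega) (two_mul_colorsUsed_le_card le_rfl hK hc')

/-- If `G` has order `n` and maximum degree at most 3, then `W⁺(G) ≥ n/2`, with
equality if and only if every connected component of `G` is isomorphic to `K₄`
(i.e. `G` is a disjoint union of `n/4` copies of `K₄`). -/
theorem wormUpper_ge_half {V : Type*} [Fintype V] [DecidableEq V]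
    (G : SimpleGraph V) [DecidableRel G.Adj] (hdeg : ∀ v : V, G.degree v ≤ 3) :
    ∀ w : ℕ, IsGreatest (wormFeasible G) w →
      Fintype.card V ≤ 2 * w ∧
      (Fintype.card V = 2 * w ↔
        ∀ C : G.ConnectedComponent,
          Nonempty (G.induce C.supp ≃g (⊤ : SimpleGraph (Fin 4)))) :=
  wormUpper_ge_half_general G hdeg
end
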